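/- arXiv:1004.1343 — 8 statements merged into one kernel-verified Lean document; each statement's English description precedes it below -/
import Mathlib

section
/- Let r : Q → ℤ be a map on the half plane Q = {(m,n) ∈ ℤ² | m ≤ n−2} satisfying the SL₂-tiling equations r(i,j)·r(i+1,j+1) − r(i,j+1)·r(i+1,j) = 1 whenever (i,j), (i+1,j+1) ∈ Q, and the edge condition r(i,i+2)·r(i+1,i+3) − r(i,i+3) = 1 for all i. If r takes positive integer values on the 'zig-zag' frontier arcs, then the values of r at all points of Q are determined by the values on the frontier together with these equations. -/
/-- An SL₂-tiling of the half plane `Q = {(m,n) | m ≤ n-2}` with positive integer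
values is determined by its values on the frontier arcs `(i, i+2)` together with the
SL₂ equations: two such tilings agreeing on the frontier agree everywhere on `Q`. -/
theorem SL2_tiling_determined_by_frontier
    (r r' : ℤ → ℤ → ℤ)
    (hpos : ∀ i j : ℤ, i ≤ j - 2 → 0 < r i j)
    (hpos' : ∀ i j : ℤ, i ≤ j - 2 → 0 < r' i j)
    (hsl2 : ∀ i j : ℤ, i ≤ j - 3 →
      r i j * r (i + 1) (j + 1) - r i (j + 1) * r (i + 1) j = 1)
    (hsl2' : ∀ i j : ℤ, i ≤ j - 3 →
      r' i j * r' (i + 1) (j + 1) - r' i (j + 1) * r' (i + 1) j = 1)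
    (hedge : ∀ i : ℤ, r i (i + 2) * r (i + 1) (i + 3) - r i (i + 3) = 1)
    (hedge' : ∀ i : ℤ, r' i (i + 2) * r' (i + 1) (i + 3) - r' i (i + 3) = 1)
    (hfrontier : ∀ i : ℤ, r i (i + 2) = r' i (i + 2)) :
    ∀ i j : ℤ, i ≤ j - 2 → r i j = r' i j := by
  have key : ∀ k : ℕ, ∀ i : ℤ, r i (i + 2 + k) = r' i (i + 2 + k) := by
    intro k
    induction k using Nat.strong_induction_on with
    | _ k ih =>
      match k, ih with
      | 0, _ =>
        intro i
        simpa using hfrontier i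
      | 1, _ =>
        intro i
        have h1 := hedge i
        have h1' := hedge' i
        have e1 := hfrontier i
        have e2 := hfrontier (i + 1)
        have h3 : i + 1 + 2 = i + 3 := by ring
        rw [h3] at e2
        have h4 : i + 2 + ((1 : ℕ) : ℤ) = i + 3 := by push_cast; ring
        rw [h4]
        rw [e1, e2] at h1
        linarith [h1, h1']
      | (n + 2), ih =>
        intro i
        have ih1 := ih (n + 1) (by omega) i
        have ih2 := ih (n + 1) (by omega) (i + 1)
        have ih3 := ih n (by omega) (i + 1)
        have e1 : i + 2 + ((n + 1 : ℕ) : ℤ) = i + (n : ℤ) + 3 := by push_cast; ring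
        have e2 : i + 1 + 2 + ((n + 1 : ℕ) : ℤ) = i + (n : ℤ) + 4 := by push_cast; ring
        have e3 : i + 1 + 2 + ((n : ℕ) : ℤ) = i + (n : ℤ) + 3 := by push_cast; ring
        rw [e1] at ih1; rw [e2] at ih2; rw [e3] at ih3
        have hs := hsl2 i (i + (n : ℤ) + 3) (by omega)
        have hs' := hsl2' i (i + (n : ℤ) + 3) (by omega)
        have e4 : i + (n : ℤ) + 3 + 1 = i + (n : ℤ) + 4 := by ring
        rw [e4] at hs hs'
        have hc : 0 < r (i + 1) (i + (n : ℤ) + 3) := hpos (i + 1) _ (by omega)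
        have e5 : i + 2 + ((n + 2 : ℕ) : ℤ) = i + (n : ℤ) + 4 := by push_cast; ring
        rw [e5]
        rw [ih1, ih2] at hs
        rw [← ih3] at hs'
        apply mul_right_cancel₀ (ne_of_gt hc)
        linarith [hs, hs']
  intro i j hij
  have hk : j = i + 2 + ((j - i - 2).toNat : ℤ) := by omega
  rw [hk]
  exact key _ i
end

section
/- If 𝔗 is a locally finite maximal collection of pairwise non-crossing arcs, then every arc 𝔡 is spanned by some arc 𝔱 ∈ 𝔗. -/
/-- An arc is a pair of integers `(m,n)` with `m ≤ n - 2`. -/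
def IsArc (a : ℤ × ℤ) : Prop := a.1 ≤ a.2 - 2

/-- Two arcs cross if `a < c < b < d` or `c < a < d < b`. -/
def Cross (a b : ℤ × ℤ) : Prop :=
  (a.1 < b.1 ∧ b.1 < a.2 ∧ a.2 < b.2) ∨ (b.1 < a.1 ∧ a.1 < b.2 ∧ b.2 < a.2)

/-- The arc `(s,t)` spans the arc `(u,v)` if `s ≤ u < v < t` or `s < u < v ≤ t`. -/
def Spans (s u : ℤ × ℤ) : Prop :=
  (s.1 ≤ u.1 ∧ u.1 < u.2 ∧ u.2 < s.2) ∨ (s.1 < u.1 ∧ u.1 < u.2 ∧ u.2 ≤ s.2)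

/-- If 𝔗 is a locally finite maximal collection of pairwise non-crossing arcs, then
every arc is spanned by some arc of 𝔗. -/
theorem locally_finite_maximal_spans
    (T : Set (ℤ × ℤ))
    (harc : ∀ a ∈ T, IsArc a)
    (hnc : ∀ a ∈ T, ∀ b ∈ T, ¬ Cross a b)
    (hmax : ∀ d : ℤ × ℤ, IsArc d → d ∉ T → ∃ t ∈ T, Cross d t ∨ Cross t d)
    (hlf : ∀ n : ℤ, {a ∈ T | a.1 = n ∨ a.2 = n}.Finite) :
    ∀ d : ℤ × ℤ, IsArc d → ∃ t ∈ T, Spans t d := by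
  rintro ⟨u, v⟩ hd
  by_contra hno
  push_neg at hno
  have hd' : u ≤ v - 2 := hd
  have hNS : ∀ t ∈ T, ¬((t.1 ≤ u ∧ u < v ∧ v < t.2) ∨ (t.1 < u ∧ u < v ∧ v ≤ t.2)) :=
    fun t ht => hno t ht
  -- for every arc (x,y) spanning (u,v), some arc of T crosses it
  have key : ∀ x y : ℤ, x ≤ y - 2 →
      ((x ≤ u ∧ u < v ∧ v < y) ∨ (x < u ∧ u < v ∧ v ≤ y)) →
      ∃ t ∈ T, (x < t.1 ∧ t.1 < y ∧ y < t.2) ∨ (t.1 < x ∧ x < t.2 ∧ t.2 < y) := by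
    intro x y hxy hsp
    have hnotin : (x, y) ∉ T := fun h => hno (x, y) h hsp
    obtain ⟨t, ht, hc⟩ := hmax (x, y) hxy hnotin
    refine ⟨t, ht, ?_⟩
    rcases hc with h | h
    · exact h
    · exact Or.symm h
  -- there is a "B-arc": t.1 < u < t.2 < v
  have hB : ∃ t ∈ T, t.1 < u ∧ u < t.2 ∧ t.2 < v := by
    by_contra hnoB
    push_neg at hnoB
    obtain ⟨t1, ht1, hc1⟩ := key u (v + 1) (by omega) (by omega)
    have hS1 : u < t1.1 ∧ t1.1 ≤ v ∧ v < t1.2 := by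
      rcases hc1 with h | h
      · exact ⟨h.1, by omega, by omega⟩
      · exfalso
        have h1 := hNS t1 ht1
        have h2 := hnoB t1 ht1 h.1 h.2.1
        omega
    obtain ⟨a', ha', hamin⟩ := Int.exists_least_of_bdd
      (P := fun a => ∃ b : ℤ, (a, b) ∈ T ∧ u < a ∧ a ≤ v ∧ v < b)
      ⟨u, by rintro z ⟨b, _, hz, _⟩; omega⟩
      ⟨t1.1, t1.2, by rwa [Prod.mk.eta], hS1.1, hS1.2.1, hS1.2.2⟩
    obtain ⟨b0, hb0T, hua', hav', hvb0⟩ := ha'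
    have hfin : {b : ℤ | (a', b) ∈ T ∧ v < b}.Finite := by
      apply Set.Finite.subset ((hlf a').image Prod.snd)
      rintro b ⟨hbT, _⟩
      exact ⟨(a', b), ⟨hbT, Or.inl rfl⟩, rfl⟩
    obtain ⟨bb, hbb⟩ := hfin.bddAbove
    obtain ⟨b', ⟨hb'T, hvb'⟩, hbmax⟩ := Int.exists_greatest_of_bdd
      (P := fun b => (a', b) ∈ T ∧ v < b)
      ⟨bb, fun z hz => hbb hz⟩ ⟨b0, hb0T, hvb0⟩
    obtain ⟨t2, ht2, hc2⟩ := key u b' (by omega) (by omega)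
    rcases hc2 with h | h
    · have hx : ¬((a' < t2.1 ∧ t2.1 < b' ∧ b' < t2.2) ∨ (t2.1 < a' ∧ a' < t2.2 ∧ t2.2 < b')) :=
        hnc (a', b') hb'T t2 ht2
      have h1a : t2.1 ≤ a' := by omega
      have hmem : ∃ b : ℤ, (t2.1, b) ∈ T ∧ u < t2.1 ∧ t2.1 ≤ v ∧ v < b :=
        ⟨t2.2, by rwa [Prod.mk.eta], h.1, by omega, by omega⟩
      have h3 := hamin t2.1 hmem
      have heq : t2.1 = a' := by omega
      have hmem2 : (a', t2.2) ∈ T ∧ v < t2.2 := by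
        refine ⟨?_, by omega⟩
        rw [← heq]; rwa [Prod.mk.eta]
      have := hbmax t2.2 hmem2
      omega
    · exfalso
      have h1 := hNS t2 ht2
      have h2 := hnoB t2 ht2 h.1 h.2.1
      omega
  -- there is a "B'-arc": u < t.1 < v < t.2
  have hB' : ∃ t ∈ T, u < t.1 ∧ t.1 < v ∧ v < t.2 := by
    by_contra hnoB'
    push_neg at hnoB'
    obtain ⟨t1, ht1, hc1⟩ := key (u - 1) v (by omega) (by omega)
    have hS1 : t1.1 < u ∧ u ≤ t1.2 ∧ t1.2 < v := by
      rcases hc1 with h | h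
      · exfalso
        have h1 := hNS t1 ht1
        have hu : u < t1.1 := by omega
        have h2 := hnoB' t1 ht1 hu h.2.1
        omega
      · exact ⟨by omega, by omega, h.2.2⟩
    obtain ⟨b', hb'ex, hbmax⟩ := Int.exists_greatest_of_bdd
      (P := fun b => ∃ a : ℤ, (a, b) ∈ T ∧ a < u ∧ u ≤ b ∧ b < v)
      ⟨v, by rintro z ⟨a, _, _, _, hz⟩; omega⟩
      ⟨t1.2, t1.1, by rwa [Prod.mk.eta], hS1.1, hS1.2.1, hS1.2.2⟩
    obtain ⟨a0, ha0T, ha0u, hub', hb'v⟩ := hb'ex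
    have hfin : {a : ℤ | (a, b') ∈ T ∧ a < u}.Finite := by
      apply Set.Finite.subset ((hlf b').image Prod.fst)
      rintro a ⟨haT, _⟩
      exact ⟨(a, b'), ⟨haT, Or.inr rfl⟩, rfl⟩
    obtain ⟨bl, hbl⟩ := hfin.bddBelow
    obtain ⟨a', ⟨ha'T, ha'u⟩, hamin⟩ := Int.exists_least_of_bdd
      (P := fun a => (a, b') ∈ T ∧ a < u)
      ⟨bl, fun z hz => hbl hz⟩ ⟨a0, ha0T, ha0u⟩
    obtain ⟨t2, ht2, hc2⟩ := key a' v (by omega) (by omega)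
    rcases hc2 with h | h
    · exfalso
      have h1 := hNS t2 ht2
      have hu : u < t2.1 := by omega
      have h2 := hnoB' t2 ht2 hu h.2.1
      omega
    · have hx : ¬((a' < t2.1 ∧ t2.1 < b' ∧ b' < t2.2) ∨ (t2.1 < a' ∧ a' < t2.2 ∧ t2.2 < b')) :=
        hnc (a', b') ha'T t2 ht2
      have hge : b' ≤ t2.2 := by omega
      have hmem : ∃ a : ℤ, (a, t2.2) ∈ T ∧ a < u ∧ u ≤ t2.2 ∧ t2.2 < v :=
        ⟨t2.1, by rwa [Prod.mk.eta], by omega, by omega, h.2.2⟩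
      have hle := hbmax t2.2 hmem
      have heq : t2.2 = b' := by omega
      have hmem2 : (t2.1, b') ∈ T ∧ t2.1 < u := by
        refine ⟨?_, by omega⟩
        rw [← heq]; rwa [Prod.mk.eta]
      have := hamin t2.1 hmem2
      omega
  -- now combine: extremal B-arc and B'-arc
  obtain ⟨β, hβT, hβ⟩ := hB
  obtain ⟨γ, hγT, hγ⟩ := hB'
  obtain ⟨q, hqex, hqmax⟩ := Int.exists_greatest_of_bdd
    (P := fun q => ∃ t, t ∈ T ∧ t.2 = q ∧ t.1 < u ∧ u < q ∧ q < v)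
    ⟨v, by rintro z ⟨t, _, _, _, _, hz⟩; omega⟩
    ⟨β.2, β, hβT, rfl, hβ.1, hβ.2.1, hβ.2.2⟩
  obtain ⟨tq, htqT, htq2, htq1, huq, hqv⟩ := hqex
  obtain ⟨r, hrex, hrmin⟩ := Int.exists_least_of_bdd
    (P := fun r => ∃ t, t ∈ T ∧ t.1 = r ∧ u < r ∧ r < v ∧ v < t.2)
    ⟨u, by rintro z ⟨t, _, _, hz, _, _⟩; omega⟩
    ⟨γ.1, γ, hγT, rfl, hγ.1, hγ.2.1, hγ.2.2⟩
  obtain ⟨tr, htrT, htr1, hur, hrv, hvtr⟩ := hrex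
  have hfinq : {p : ℤ | (p, q) ∈ T ∧ p < u}.Finite := by
    apply Set.Finite.subset ((hlf q).image Prod.fst)
    rintro p ⟨hpT, _⟩
    exact ⟨(p, q), ⟨hpT, Or.inr rfl⟩, rfl⟩
  obtain ⟨bl, hbl⟩ := hfinq.bddBelow
  obtain ⟨p, ⟨hpT, hpu⟩, hpmin⟩ := Int.exists_least_of_bdd
    (P := fun p => (p, q) ∈ T ∧ p < u)
    ⟨bl, fun z hz => hbl hz⟩
    ⟨tq.1, by rw [← htq2]; rwa [Prod.mk.eta], htq1⟩
  have hfinr : {s : ℤ | (r, s) ∈ T ∧ v < s}.Finite := by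
    apply Set.Finite.subset ((hlf r).image Prod.snd)
    rintro s ⟨hsT, _⟩
    exact ⟨(r, s), ⟨hsT, Or.inl rfl⟩, rfl⟩
  obtain ⟨bu, hbu⟩ := hfinr.bddAbove
  obtain ⟨s, ⟨hsT, hvs⟩, hsmax⟩ := Int.exists_greatest_of_bdd
    (P := fun s => (r, s) ∈ T ∧ v < s)
    ⟨bu, fun z hz => hbu hz⟩
    ⟨tr.2, by rw [← htr1]; rwa [Prod.mk.eta], hvtr⟩
  obtain ⟨t, ht, hc⟩ := key p s (by omega) (by omega)
  rcases hc with h | h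
  · -- p < t.1 < s < t.2
    have hx1 : ¬((p < t.1 ∧ t.1 < q ∧ q < t.2) ∨ (t.1 < p ∧ p < t.2 ∧ t.2 < q)) :=
      hnc (p, q) hpT t ht
    have hx2 : ¬((r < t.1 ∧ t.1 < s ∧ s < t.2) ∨ (t.1 < r ∧ r < t.2 ∧ t.2 < s)) :=
      hnc (r, s) hsT t ht
    have h1 : q ≤ t.1 := by omega
    have h2 : t.1 ≤ r := by omega
    have hmem : ∃ t', t' ∈ T ∧ t'.1 = t.1 ∧ u < t.1 ∧ t.1 < v ∧ v < t'.2 :=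
      ⟨t, ht, rfl, by omega, by omega, by omega⟩
    have h3 := hrmin t.1 hmem
    have heq : t.1 = r := by omega
    have hmem2 : (r, t.2) ∈ T ∧ v < t.2 := by
      refine ⟨?_, by omega⟩
      rw [← heq]; rwa [Prod.mk.eta]
    have := hsmax t.2 hmem2
    omega
  · -- t.1 < p < t.2 < s
    have h0 := hNS t ht
    have hx1 : ¬((p < t.1 ∧ t.1 < q ∧ q < t.2) ∨ (t.1 < p ∧ p < t.2 ∧ t.2 < q)) :=
      hnc (p, q) hpT t ht
    have h1 : q ≤ t.2 := by omega
    have h2 : t.2 < v := by omega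
    have hmem : ∃ t', t' ∈ T ∧ t'.2 = t.2 ∧ t'.1 < u ∧ u < t.2 ∧ t.2 < v :=
      ⟨t, ht, rfl, by omega, by omega, h2⟩
    have h3 := hqmax t.2 hmem
    have heq : t.2 = q := by omega
    have hmem2 : (t.1, q) ∈ T ∧ t.1 < u := by
      refine ⟨?_, by omega⟩
      rw [← heq]; rwa [Prod.mk.eta]
    have := hpmin t.1 hmem2
    omega
end

section
/- Let 𝔗 be a maximal collection of pairwise non-crossing arcs with a fountain at n. Then for every arc (p,q) with p < q ≤ n (or with n ≤ p < q), there exists an arc 𝔱 = (m,n) ∈ 𝔗 (respectively 𝔱 = (n,m) ∈ 𝔗) which spans (p,q). -/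
/-- If 𝔗 is a maximal collection of pairwise non-crossing arcs with a fountain at `n`,
then every arc `(p,q)` with `p < q ≤ n` is spanned by some arc `(m,n) ∈ 𝔗`, and every
arc `(p,q)` with `n ≤ p < q` is spanned by some arc `(n,m) ∈ 𝔗`. -/
theorem fountain_spans
    (T : Set (ℤ × ℤ)) (n : ℤ)
    (harc : ∀ a ∈ T, IsArc a)
    (hnc : ∀ a ∈ T, ∀ b ∈ T, ¬ Cross a b)
    (hmax : ∀ d : ℤ × ℤ, IsArc d → d ∉ T → ∃ t ∈ T, Cross d t ∨ Cross t d)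
    (hfountain₁ : {m : ℤ | (m, n) ∈ T}.Infinite)
    (hfountain₂ : {p : ℤ | (n, p) ∈ T}.Infinite) :
    ∀ p q : ℤ, IsArc (p, q) →
      (q ≤ n → ∃ m : ℤ, (m, n) ∈ T ∧ Spans (m, n) (p, q)) ∧
      (n ≤ p → ∃ m : ℤ, (n, m) ∈ T ∧ Spans (n, m) (p, q)) := by
  have key : ∀ (S : Set ℤ) (B : ℤ), S.Infinite → (∀ s ∈ S, s ≤ B) →
      ∀ x : ℤ, ∃ s ∈ S, s < x := by
    intro S B hS hB x
    by_contra h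
    push_neg at h
    exact hS ((Set.finite_Icc x B).subset fun s hs => ⟨h s hs, hB s hs⟩)
  have key' : ∀ (S : Set ℤ) (B : ℤ), S.Infinite → (∀ s ∈ S, B ≤ s) →
      ∀ x : ℤ, ∃ s ∈ S, x < s := by
    intro S B hS hB x
    by_contra h
    push_neg at h
    exact hS ((Set.finite_Icc B x).subset fun s hs => ⟨hB s hs, h s hs⟩)
  intro p q hpq
  have hpq' : p < q := by
    have := hpq
    simp only [IsArc] at this
    omega
  constructor
  · intro hqn
    obtain ⟨m, hm, hmp⟩ := key _ (n - 2) hfountain₁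
      (fun s hs => harc _ hs) p
    exact ⟨m, hm, Or.inr ⟨hmp, hpq', hqn⟩⟩
  · intro hnp
    obtain ⟨m, hm, hqm⟩ := key' _ (n + 2) hfountain₂
      (fun s hs => by have := harc _ hs; simp only [IsArc] at this; omega) q
    exact ⟨m, hm, Or.inl ⟨hnp, hpq', hqm⟩⟩
end

section
/- Let 𝔗 be a maximal collection of pairwise non-crossing arcs with a fountain at n. Then an arc (p,q) with p < n < q crosses infinitely many arcs of 𝔗. -/
/-! The arcs `(m, n)` of the fountain with `m < p` all cross `(p, q)`, since `m < p < n < q`.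
All but finitely many feet `m` of the fountain lie below `p`, because they also lie below `n`. -/

theorem Set.Infinite.inter_Iio_of_bddAbove {α : Type*} [LinearOrder α] [LocallyFiniteOrder α]
    {S : Set α} (hS : S.Infinite) (hbdd : BddAbove S) (p : α) : (S ∩ Set.Iio p).Infinite := by
  have hfin : (S ∩ Set.Ici p).Finite :=
    (bddBelow_Ici.mono Set.inter_subset_right).finite_of_bddAbove
      (hbdd.mono Set.inter_subset_left)
  refine (hS.sdiff hfin).mono fun m hm => ⟨hm.1, ?_⟩
  exact not_le.mp fun hpm : p ≤ m => hm.2 ⟨hm.1, hpm⟩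

theorem cross_of_lt_of_lt_of_lt {a b : ℤ × ℤ} (h₁ : a.1 < b.1) (h₂ : b.1 < a.2) (h₃ : a.2 < b.2) :
    Cross a b :=
  Or.inl ⟨h₁, h₂, h₃⟩

theorem bddAbove_setOf_mem_left {T : Set (ℤ × ℤ)} (harc : ∀ a ∈ T, IsArc a) (n : ℤ) :
    BddAbove {m : ℤ | (m, n) ∈ T} :=
  ⟨n - 2, fun m hm => harc (m, n) hm⟩

theorem arc_over_fountain_crosses_infinitely_many_general
    (T : Set (ℤ × ℤ)) (n : ℤ)
    (harc : ∀ a ∈ T, IsArc a)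
    (hfountain₁ : {m : ℤ | (m, n) ∈ T}.Infinite)
    (p q : ℤ) (h₁ : p < n) (h₂ : n < q) :
    {t ∈ T | Cross (p, q) t ∨ Cross t (p, q)}.Infinite := by
  have hfeet := hfountain₁.inter_Iio_of_bddAbove (bddAbove_setOf_mem_left harc n) p
  refine (hfeet.image (Prod.mk_left_injective n).injOn).mono ?_
  rintro _ ⟨m, ⟨hmT, hmp⟩, rfl⟩
  exact ⟨hmT, Or.inr (cross_of_lt_of_lt_of_lt hmp h₁ h₂)⟩

/-- If 𝔗 is a maximal collection of pairwise non-crossing arcs with a fountain at `n`,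
then an arc `(p,q)` with `p < n < q` crosses infinitely many arcs of 𝔗. -/
theorem arc_over_fountain_crosses_infinitely_many
    (T : Set (ℤ × ℤ)) (n : ℤ)
    (harc : ∀ a ∈ T, IsArc a)
    (hnc : ∀ a ∈ T, ∀ b ∈ T, ¬ Cross a b)
    (hmax : ∀ d : ℤ × ℤ, IsArc d → d ∉ T → ∃ t ∈ T, Cross d t ∨ Cross t d)
    (hfountain₁ : {m : ℤ | (m, n) ∈ T}.Infinite)
    (hfountain₂ : {p : ℤ | (n, p) ∈ T}.Infinite)
    (p q : ℤ) (hpq : IsArc (p, q)) (h₁ : p < n) (h₂ : n < q) :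
    {t ∈ T | Cross (p, q) t ∨ Cross t (p, q)}.Infinite :=
  arc_over_fountain_crosses_infinitely_many_general T n harc hfountain₁ p q h₁ h₂
end

section
/- Let 𝔗 be a maximal collection of pairwise non-crossing arcs of the integer line which is locally finite, and let 𝔱 = (s,t) ∈ 𝔗. Then the arcs of 𝔗 that are spanned by 𝔱, viewed as diagonals of the polygon with vertices {s, s+1, ..., t}, form a triangulation of this polygon; in particular their number is t − s − 2. -/
/-- A diagonal of the polygon with vertex set `{s, …, t}`: a pair `(u,v)` with
`s ≤ u < v ≤ t`, `v ≥ u + 2` and `(u,v) ≠ (s,t)`. -/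
def IsDiag (s t : ℤ) (d : ℤ × ℤ) : Prop :=
  s ≤ d.1 ∧ d.1 + 2 ≤ d.2 ∧ d.2 ≤ t ∧ d ≠ (s, t)

/-!
Call `(a, b)` an edge of `T` if it is a side `(a, a + 1)` of the polygon or an arc of `T`.
For an arc `(s, t) ∈ T`, let `m` be the largest `v ∈ (s, t)` such that `(s, v)` is an edge.
Maximality of `T` forces `(m, t)` to be an edge as well, and every arc of `T` strictly inside
`[s, t]` lies over `[s, m]` or over `[m, t]`: the polygon is cut along the triangle `s, m, t`.
Induction on `t - s` then shows that `T` has `t - s - 1` arcs over `[s, t]`, `(s, t)` included.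
The spanned arcs are maximal among diagonals since an arc of `T` crossing a diagonal of `[s, t]`
cannot cross `(s, t)`, so it is spanned by `(s, t)` itself.
-/

variable {T : Set (ℤ × ℤ)}

def IsEdge (T : Set (ℤ × ℤ)) (a b : ℤ) : Prop := b = a + 1 ∨ (a, b) ∈ T

def arcsWithin (T : Set (ℤ × ℤ)) (s t : ℤ) : Set (ℤ × ℤ) := {u ∈ T | s ≤ u.1 ∧ u.2 ≤ t}

lemma IsArc.fst_lt {a : ℤ × ℤ} (h : IsArc a) : a.1 < a.2 := by
  unfold IsArc at h
  omega

lemma spans_iff {s t : ℤ} {u : ℤ × ℤ} (hu : u.1 < u.2) :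
    Spans (s, t) u ↔ s ≤ u.1 ∧ u.2 ≤ t ∧ u ≠ (s, t) := by
  obtain ⟨u₁, u₂⟩ := u
  simp only [Spans, ne_eq, Prod.mk.injEq] at hu ⊢
  omega

lemma isDiag_iff {s t : ℤ} {d : ℤ × ℤ} : IsDiag s t d ↔ IsArc d ∧ Spans (s, t) d := by
  obtain ⟨d₁, d₂⟩ := d
  simp only [IsDiag, IsArc, Spans, ne_eq, Prod.mk.injEq]
  omega

lemma spans_of_cross {s t : ℤ} {d u : ℤ × ℤ} (hd : Spans (s, t) d)
    (hsu : ¬ Cross (s, t) u) (hus : ¬ Cross u (s, t)) (hdu : Cross d u ∨ Cross u d) :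
    Spans (s, t) u := by
  obtain ⟨d₁, d₂⟩ := d
  obtain ⟨u₁, u₂⟩ := u
  simp only [Spans, Cross] at *
  omega

lemma arcsWithin_succ (harc : ∀ a ∈ T, IsArc a) (s : ℤ) : arcsWithin T s (s + 1) = ∅ := by
  refine Set.eq_empty_of_forall_notMem fun u ⟨hu, h₁, h₂⟩ => ?_
  have := harc u hu
  unfold IsArc at this
  omega

lemma arcsWithin_finite (harc : ∀ a ∈ T, IsArc a) (s t : ℤ) : (arcsWithin T s t).Finite := by
  refine ((Set.finite_Icc s t).prod (Set.finite_Icc s t)).subset fun u ⟨hu, h₁, h₂⟩ => ?_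
  have := harc u hu
  unfold IsArc at this
  exact ⟨⟨h₁, by omega⟩, ⟨by omega, h₂⟩⟩

lemma disjoint_arcsWithin (harc : ∀ a ∈ T, IsArc a) (s m t : ℤ) :
    Disjoint (arcsWithin T s m) (arcsWithin T m t) := by
  refine Set.disjoint_left.2 fun u ⟨hu, _, h₂⟩ ⟨_, h₁, _⟩ => ?_
  have := harc u hu
  unfold IsArc at this
  omega

lemma insert_spanned_eq_arcsWithin (harc : ∀ a ∈ T, IsArc a) {s t : ℤ} (hst : (s, t) ∈ T) :
    insert (s, t) {u ∈ T | Spans (s, t) u} = arcsWithin T s t := by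
  ext u
  by_cases huT : u ∈ T
  · by_cases hu : u = (s, t)
    · simp [arcsWithin, hu, hst]
    · simp [arcsWithin, huT, hu, spans_iff (harc u huT).fst_lt]
  · have hu : u ≠ (s, t) := fun h => huT (h ▸ hst)
    simp [arcsWithin, huT, hu]

lemma exists_isGreatest_edge {s t : ℤ} (h : s + 1 < t) :
    ∃ m, IsGreatest {v ∈ Set.Ioo s t | IsEdge T s v} m := by
  obtain ⟨m, hm, hle⟩ := Int.exists_greatest_of_bdd (P := (· ∈ {v ∈ Set.Ioo s t | IsEdge T s v}))
    ⟨t, fun v hv => hv.1.2.le⟩ ⟨s + 1, ⟨by omega, h⟩, Or.inl rfl⟩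
  exact ⟨m, hm, hle⟩

section Ear

variable {s t m : ℤ} (hm : IsGreatest {v ∈ Set.Ioo s t | IsEdge T s v} m)
include hm

lemma le_or_le_of_isGreatest (hnc : ∀ a ∈ T, ∀ b ∈ T, ¬ Cross a b) {u : ℤ × ℤ} (hu : u ∈ T)
    (hsp : Spans (s, t) u) : u.2 ≤ m ∨ m ≤ u.1 := by
  obtain ⟨⟨hsm, hmt⟩, hedge⟩ := hm.1
  obtain ⟨u₁, u₂⟩ := u
  simp only [Spans] at hsp ⊢
  by_contra! h
  rcases (show s = u₁ ∨ s < u₁ by omega) with rfl | hs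
  · have := hm.2 ⟨⟨by omega, by omega⟩, Or.inr hu⟩
    omega
  · have hsmT : (s, m) ∈ T := hedge.resolve_left (by omega)
    exact hnc _ hsmT _ hu (by simp only [Cross]; omega)

lemma isEdge_of_isGreatest (hnc : ∀ a ∈ T, ∀ b ∈ T, ¬ Cross a b)
    (hmax : ∀ d : ℤ × ℤ, IsArc d → d ∉ T → ∃ u ∈ T, Cross d u ∨ Cross u d)
    (hst : (s, t) ∈ T) : IsEdge T m t := by
  obtain ⟨⟨hsm, hmt⟩, -⟩ := hm.1
  by_cases hsucc : t = m + 1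
  · exact Or.inl hsucc
  refine Or.inr (by_contra fun hmtT => ?_)
  obtain ⟨u, hu, hcross⟩ := hmax (m, t) (by unfold IsArc; omega) hmtT
  have hmt_sp : Spans (s, t) (m, t) := Or.inr ⟨hsm, by omega, le_rfl⟩
  have hsp := spans_of_cross hmt_sp (hnc _ hst _ hu) (hnc _ hu _ hst) hcross
  have := le_or_le_of_isGreatest hm hnc hu hsp
  obtain ⟨u₁, u₂⟩ := u
  simp only [Spans, Cross] at hsp hcross this
  omega

lemma arcsWithin_eq_insert_union (harc : ∀ a ∈ T, IsArc a)
    (hnc : ∀ a ∈ T, ∀ b ∈ T, ¬ Cross a b) (hst : (s, t) ∈ T) :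
    arcsWithin T s t = insert (s, t) (arcsWithin T s m ∪ arcsWithin T m t) := by
  obtain ⟨⟨hsm, hmt⟩, -⟩ := hm.1
  ext u
  simp only [Set.mem_insert_iff, Set.mem_union]
  constructor
  · rintro ⟨hu, h₁, h₂⟩
    by_cases hst' : u = (s, t)
    · exact Or.inl hst'
    have hsp := (spans_iff (harc u hu).fst_lt).2 ⟨h₁, h₂, hst'⟩
    rcases le_or_le_of_isGreatest hm hnc hu hsp with h | h
    · exact Or.inr (Or.inl ⟨hu, h₁, h⟩)
    · exact Or.inr (Or.inr ⟨hu, h, h₂⟩)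
  · rintro (rfl | ⟨hu, h₁, h₂⟩ | ⟨hu, h₁, h₂⟩)
    · exact ⟨hst, le_rfl, le_rfl⟩
    · exact ⟨hu, h₁, by omega⟩
    · exact ⟨hu, by omega, h₂⟩

end Ear

theorem ncard_arcsWithin_of_isEdge (harc : ∀ a ∈ T, IsArc a)
    (hnc : ∀ a ∈ T, ∀ b ∈ T, ¬ Cross a b)
    (hmax : ∀ d : ℤ × ℤ, IsArc d → d ∉ T → ∃ u ∈ T, Cross d u ∨ Cross u d)
    {s t : ℤ} (h : IsEdge T s t) : (arcsWithin T s t).ncard = (t - s - 1).toNat := by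
  rcases h with rfl | hst
  · simp [arcsWithin_succ harc]
  have hlt : s + 1 < t := by
    have := harc _ hst
    unfold IsArc at this
    omega
  obtain ⟨m, hm⟩ := exists_isGreatest_edge hlt
  obtain ⟨⟨hsm, hmt⟩, hedge⟩ := hm.1
  have hcard_sm := ncard_arcsWithin_of_isEdge harc hnc hmax hedge
  have hcard_mt := ncard_arcsWithin_of_isEdge harc hnc hmax (isEdge_of_isGreatest hm hnc hmax hst)
  have hnotMem : (s, t) ∉ arcsWithin T s m ∪ arcsWithin T m t := by
    rintro (⟨-, -, h⟩ | ⟨-, h, -⟩) <;> simp at h <;> omega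
  have hfin_sm := arcsWithin_finite harc s m
  have hfin_mt := arcsWithin_finite harc m t
  rw [arcsWithin_eq_insert_union hm harc hnc hst,
    Set.ncard_insert_of_notMem hnotMem (hfin_sm.union hfin_mt),
    Set.ncard_union_eq (disjoint_arcsWithin harc s m t) hfin_sm hfin_mt, hcard_sm, hcard_mt]
  omega
termination_by (t - s).toNat

theorem spanned_arcs_triangulate_general
    (T : Set (ℤ × ℤ))
    (harc : ∀ a ∈ T, IsArc a)
    (hnc : ∀ a ∈ T, ∀ b ∈ T, ¬ Cross a b)
    (hmax : ∀ d : ℤ × ℤ, IsArc d → d ∉ T → ∃ u ∈ T, Cross d u ∨ Cross u d)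
    (s t : ℤ) (hst : (s, t) ∈ T) :
    (∀ d ∈ {u ∈ T | Spans (s, t) u}, IsDiag s t d) ∧
    (∀ d : ℤ × ℤ, IsDiag s t d →
      (∀ u ∈ {u ∈ T | Spans (s, t) u}, ¬ Cross d u ∧ ¬ Cross u d) →
      d ∈ {u ∈ T | Spans (s, t) u}) ∧
    {u ∈ T | Spans (s, t) u}.ncard = (t - s - 2).toNat := by
  refine ⟨fun d hd => isDiag_iff.2 ⟨harc d hd.1, hd.2⟩, fun d hd hfree => ?_, ?_⟩
  · obtain ⟨hdarc, hdsp⟩ := isDiag_iff.1 hd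
    refine ⟨by_contra fun hdT => ?_, hdsp⟩
    obtain ⟨u, hu, hcross⟩ := hmax d hdarc hdT
    have hu_sp := spans_of_cross hdsp (hnc _ hst _ hu) (hnc _ hu _ hst) hcross
    obtain ⟨h₁, h₂⟩ := hfree u ⟨hu, hu_sp⟩
    exact hcross.elim h₁ h₂
  · have hfin := Set.finite_insert.1 <|
      insert_spanned_eq_arcsWithin harc hst ▸ arcsWithin_finite harc s t
    have hcard := ncard_arcsWithin_of_isEdge harc hnc hmax (Or.inr hst)
    rw [← insert_spanned_eq_arcsWithin harc hst,
      Set.ncard_insert_of_notMem (fun h => by simp [Spans] at h) hfin] at hcard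
    omega

/-- Let 𝔗 be a locally finite maximal collection of pairwise non-crossing arcs and
`(s,t) ∈ 𝔗`.  Then the arcs of 𝔗 spanned by `(s,t)` form a triangulation of the polygon
with vertices `{s, …, t}`: they are non-crossing diagonals, the collection is maximal
among such, and its cardinality is `t - s - 2`. -/
theorem spanned_arcs_triangulate
    (T : Set (ℤ × ℤ))
    (harc : ∀ a ∈ T, IsArc a)
    (hnc : ∀ a ∈ T, ∀ b ∈ T, ¬ Cross a b)
    (hmax : ∀ d : ℤ × ℤ, IsArc d → d ∉ T → ∃ u ∈ T, Cross d u ∨ Cross u d)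
    (hlf : ∀ n : ℤ, {a ∈ T | a.1 = n ∨ a.2 = n}.Finite)
    (s t : ℤ) (hst : (s, t) ∈ T) :
    (∀ d ∈ {u ∈ T | Spans (s, t) u}, IsDiag s t d) ∧
    (∀ d : ℤ × ℤ, IsDiag s t d →
      (∀ u ∈ {u ∈ T | Spans (s, t) u}, ¬ Cross d u ∧ ¬ Cross u d) →
      d ∈ {u ∈ T | Spans (s, t) u}) ∧
    {u ∈ T | Spans (s, t) u}.ncard = (t - s - 2).toNat :=
  spanned_arcs_triangulate_general T harc hnc hmax s t hst
end

section
/- Suppose positive reals t₁, t₂, ..., u₁, u₂, ... satisfy t₁·u₁ = u₂ + 1 and t_i·u_i = t_{i−1}·u_{i+1} + 1 for all i ≥ 2, where all t_i = 1. Then u_i = u_{i+1} + 1 for all i ≥ 1, which is impossible for positive-integer-valued u_i. Hence no such positive-integer sequences exist with all t_i = 1. -/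
/-- If positive reals `t₁, t₂, …, u₁, u₂, …` satisfy `t₁u₁ = u₂ + 1` and
`tᵢuᵢ = t_{i-1}u_{i+1} + 1` for `i ≥ 2`, with all `tᵢ = 1`, then `uᵢ = u_{i+1} + 1` for
all `i ≥ 1`; consequently there are no such sequences of positive integers with all
`tᵢ = 1`. -/
theorem fountain_exchange_relations_impossible :
    (∀ t u : ℕ → ℝ, (∀ i, 1 ≤ i → 0 < t i) → (∀ i, 1 ≤ i → 0 < u i) →
      (∀ i, 1 ≤ i → t i = 1) →
      t 1 * u 1 = u 2 + 1 →
      (∀ i, 2 ≤ i → t i * u i = t (i - 1) * u (i + 1) + 1) →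
      ∀ i, 1 ≤ i → u i = u (i + 1) + 1) ∧
    ¬ ∃ t u : ℕ → ℤ, (∀ i, 1 ≤ i → 0 < t i) ∧ (∀ i, 1 ≤ i → 0 < u i) ∧
      (∀ i, 1 ≤ i → t i = 1) ∧
      t 1 * u 1 = u 2 + 1 ∧
      (∀ i, 2 ≤ i → t i * u i = t (i - 1) * u (i + 1) + 1) := by
  constructor
  · intro t u ht hu ht1 h1 h2 i hi
    rcases Nat.lt_or_ge i 2 with h | h
    · interval_cases i
      rw [ht1 1 le_rfl, one_mul] at h1
      exact h1
    · have := h2 i h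
      rw [ht1 i (by omega), ht1 (i-1) (by omega), one_mul, one_mul] at this
      exact this
  · rintro ⟨t, u, ht, hu, ht1, h1, h2⟩
    have key : ∀ i, 1 ≤ i → u i = u (i + 1) + 1 := by
      intro i hi
      rcases Nat.lt_or_ge i 2 with h | h
      · interval_cases i
        rw [ht1 1 le_rfl, one_mul] at h1
        exact h1
      · have := h2 i h
        rw [ht1 i (by omega), ht1 (i-1) (by omega), one_mul, one_mul] at this
        exact this
    have dec : ∀ n : ℕ, u (1 + n) = u 1 - n := by
      intro n
      induction n with
      | zero => simp
      | succ k ih =>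
        have := key (1 + k) (by omega)
        have : u (1 + (k+1)) = u (1 + k) - 1 := by
          rw [show 1 + k + 1 = 1 + (k+1) from by ring] at this
          omega
        rw [this, ih]
        push_cast
        ring
    obtain ⟨n, hn⟩ : ∃ n : ℕ, (n : ℤ) ≥ u 1 := ⟨(u 1).toNat, by simp [Int.self_le_toNat]⟩
    have := hu (1 + n) (by omega)
    rw [dec n] at this
    omega
end

section
/- Let 𝔗 be a maximal collection of pairwise non-crossing arcs having a fountain at n. Then every arc of 𝔗 is of the form (p,q) with either q ≤ n or n ≤ p. -/
/-- If 𝔗 is a maximal collection of pairwise non-crossing arcs with a fountain at `n`,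
then every arc `(p,q)` of 𝔗 satisfies `q ≤ n` or `n ≤ p`. -/
theorem fountain_no_arc_above
    (T : Set (ℤ × ℤ)) (n : ℤ)
    (harc : ∀ a ∈ T, IsArc a)
    (hnc : ∀ a ∈ T, ∀ b ∈ T, ¬ Cross a b)
    (hmax : ∀ d : ℤ × ℤ, IsArc d → d ∉ T → ∃ t ∈ T, Cross d t ∨ Cross t d)
    (hfountain₁ : {m : ℤ | (m, n) ∈ T}.Infinite)
    (hfountain₂ : {p : ℤ | (n, p) ∈ T}.Infinite) :
    ∀ a ∈ T, a.2 ≤ n ∨ n ≤ a.1 := by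
  intro a ha
  by_contra hcon
  push_neg at hcon
  obtain ⟨h1, h2⟩ := hcon
  -- the set of left endpoints is infinite and bounded above by n-2, so some m < a.1
  have hm : ∃ m ∈ {m : ℤ | (m, n) ∈ T}, m < a.1 := by
    by_contra hno
    push_neg at hno
    apply hfountain₁
    apply Set.Finite.subset (Set.finite_Icc a.1 (n - 2))
    intro m hmT
    have := harc (m, n) hmT
    exact ⟨hno m hmT, this⟩
  obtain ⟨m, hmT, hmlt⟩ := hm
  exact hnc (m, n) hmT a ha (Or.inl ⟨hmlt, h2, h1⟩)
end

section
/- The collection 𝔗 = {(m, −m) | m ≤ −1} ∪ {(m, −m−1) | m ≤ −2} is a locally finite maximal collection of pairwise non-crossing arcs (the 'nested concentric' configuration). -/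
/-- The nested concentric collection `{(m, -m) | m ≤ -1} ∪ {(m, -m-1) | m ≤ -2}`. -/
def NestedColl : Set (ℤ × ℤ) :=
  {a | (a.1 ≤ -1 ∧ a.2 = -a.1) ∨ (a.1 ≤ -2 ∧ a.2 = -a.1 - 1)}

/-- The nested concentric collection is a locally finite maximal collection of
pairwise non-crossing arcs. -/
theorem nested_collection_locally_finite_maximal :
    (∀ a ∈ NestedColl, IsArc a) ∧
    (∀ a ∈ NestedColl, ∀ b ∈ NestedColl, ¬ Cross a b) ∧
    (∀ n : ℤ, {a ∈ NestedColl | a.1 = n ∨ a.2 = n}.Finite) ∧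
    (∀ d : ℤ × ℤ, IsArc d → d ∉ NestedColl →
      ∃ t ∈ NestedColl, Cross d t ∨ Cross t d) := by
  refine ⟨?_, ?_, ?_, ?_⟩
  · rintro ⟨m, q⟩ (⟨h1, h2⟩ | ⟨h1, h2⟩) <;> simp only [IsArc] <;> omega
  · rintro ⟨m, q⟩ (⟨h1, h2⟩ | ⟨h1, h2⟩) ⟨m', q'⟩ (⟨h1', h2'⟩ | ⟨h1', h2'⟩)
      (⟨c1, c2, c3⟩ | ⟨c1, c2, c3⟩) <;> simp_all <;> omega
  · intro n
    apply Set.Finite.subset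
      (((((Set.finite_singleton ((-n-1, n) : ℤ × ℤ)).insert (-n, n)).insert (n, -n-1)).insert (n, -n)))
    rintro ⟨m, q⟩ ⟨(⟨h1, h2⟩ | ⟨h1, h2⟩), (h3 | h3)⟩ <;>
      simp only [Set.mem_insert_iff, Set.mem_singleton_iff, Prod.mk.injEq] <;> omega
  · rintro ⟨p, q⟩ hd hnm
    simp only [IsArc] at hd
    simp only [NestedColl, Set.mem_setOf_eq, not_or, not_and] at hnm
    rcases lt_trichotomy q (-p) with h | h | h
    · have hq : q ≤ -p - 2 := by
        rcases eq_or_lt_of_le (by omega : q ≤ -p - 1) with he | hl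
        · exact absurd he (hnm.2 (by omega))
        · omega
      refine ⟨(p + 1, -p - 1), Or.inl ⟨by omega, by omega⟩, Or.inl (Or.inl ?_)⟩
      exact ⟨by omega, by omega, by omega⟩
    · exact absurd h (hnm.1 (by omega))
    · refine ⟨(-q, q - 1), Or.inr ⟨by omega, by omega⟩, Or.inl (Or.inr ?_)⟩
      exact ⟨by omega, by omega, by omega⟩
end
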